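/- Fix integers 𝒩, N_b, N ≥ 1, a symmetric matrix A ∈ ℝ^{N×N}, a matrix B ∈ ℝ^{N×2𝒩}, and a symmetric matrix M ∈ ℝ^{2𝒩×2𝒩}. For R ∈ ℝ^{𝒩×N_b} let I_R = [[R,0],[0,R]] ∈ ℝ^{2𝒩×2N_b} and S(R) = (B I_R)ᵀ A (B I_R) ∈ ℝ^{2N_b×2N_b}, and define f(R) = −Tr( M I_R S(R)^{-1} I_Rᵀ ). If S(R) is invertible at a point R, then f is Fréchet differentiable at R and its derivative in the direction H ∈ ℝ^{𝒩×N_b} equals −2 Tr( Hᵀ ( M_A(R)^{++} + M_A(R)^{--} ) ), where M_A(R) = M I_R S(R)^{-1} − (Bᵀ A B) I_R S(R)^{-1} I_Rᵀ M I_R S(R)^{-1} ∈ ℝ^{2𝒩×2N_b}, and M_A(R)^{++}, M_A(R)^{--} ∈ ℝ^{𝒩×N_b} denote its top-left and bottom-right blocks. Equivalently, the gradient of f at R is −2(M_A(R)^{++} + M_A(R)^{--}). -/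

import Mathlib

open Matrix

attribute [local instance] Matrix.normedAddCommGroup Matrix.normedSpace

/-- For `R ∈ ℝ^{𝒩×N_b}`, the block-diagonal matrix `I_R = [[R,0],[0,R]]`. -/
noncomputable def blockDiag2 {p q : ℕ} (R : Matrix (Fin p) (Fin q) ℝ) :
    Matrix (Fin p ⊕ Fin p) (Fin q ⊕ Fin q) ℝ :=
  Matrix.fromBlocks R 0 0 R

/-- The overlap matrix `S(R) = (B I_R)ᵀ A (B I_R)`. -/
noncomputable def overlapS {𝒩 Nb N : ℕ} (A : Matrix (Fin N) (Fin N) ℝ)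
    (B : Matrix (Fin N) (Fin 𝒩 ⊕ Fin 𝒩) ℝ) (R : Matrix (Fin 𝒩) (Fin Nb) ℝ) :
    Matrix (Fin Nb ⊕ Fin Nb) (Fin Nb ⊕ Fin Nb) ℝ :=
  (B * blockDiag2 R)ᵀ * A * (B * blockDiag2 R)

/-- The matrix `M_A(R) = M I_R S(R)⁻¹ − (Bᵀ A B) I_R S(R)⁻¹ I_Rᵀ M I_R S(R)⁻¹`. -/
noncomputable def MA {𝒩 Nb N : ℕ} (A : Matrix (Fin N) (Fin N) ℝ)
    (B : Matrix (Fin N) (Fin 𝒩 ⊕ Fin 𝒩) ℝ)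
    (M : Matrix (Fin 𝒩 ⊕ Fin 𝒩) (Fin 𝒩 ⊕ Fin 𝒩) ℝ)
    (R : Matrix (Fin 𝒩) (Fin Nb) ℝ) :
    Matrix (Fin 𝒩 ⊕ Fin 𝒩) (Fin Nb ⊕ Fin Nb) ℝ :=
  M * blockDiag2 R * (overlapS A B R)⁻¹ -
    (Bᵀ * A * B) * blockDiag2 R * (overlapS A B R)⁻¹ * (blockDiag2 R)ᵀ *
      M * blockDiag2 R * (overlapS A B R)⁻¹

/-!
Write `X = I_R`, `S(X) = (B X)ᵀ A (B X)` and `f = -Tr (M X S(X)⁻¹ Xᵀ)`. By the product rule and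
`d(S⁻¹) = -S⁻¹ (dS) S⁻¹`, the derivative of `Tr (M X S⁻¹ Xᵀ)` in the direction `H` is a sum of four
traces. Since `M`, `A` and hence `S⁻¹` are symmetric, transposition and cyclicity of the trace
identify them pairwise, giving `2 Tr (Hᵀ (M X S⁻¹ - Bᵀ A B X S⁻¹ Xᵀ M X S⁻¹))`. Finally
`I_H` is block diagonal, so `Tr (I_Hᵀ N) = Tr (Hᵀ (N^{++} + N^{--}))`.
-/

theorem map_ringInverse {M N F : Type*} [MonoidWithZero M] [MonoidWithZero N] [EquivLike F M N]
    [MulEquivClass F M N] (f : F) (x : M) : f (Ring.inverse x) = Ring.inverse (f x) := by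
  by_cases hx : IsUnit x
  · obtain ⟨u, rfl⟩ := hx
    simpa using (Ring.inverse_unit (Units.map (f : M →* N) u)).symm
  · rw [Ring.inverse_non_unit x hx, Ring.inverse_non_unit _ ((MulEquiv.isUnit_map f).not.mpr hx),
      map_zero]

namespace Matrix

variable {l m n : Type*} [Fintype l] [Fintype m] [Fintype n]

noncomputable def mulCLM : Matrix l m ℝ →L[ℝ] Matrix m n ℝ →L[ℝ] Matrix l n ℝ :=
  LinearMap.toContinuousLinearMap <|
    (LinearMap.toContinuousLinearMap : (Matrix m n ℝ →ₗ[ℝ] Matrix l n ℝ) ≃ₗ[ℝ] _).toLinearMap ∘ₗ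
      mulLinearMap ℝ

noncomputable def transposeCLM : Matrix m n ℝ →L[ℝ] Matrix n m ℝ :=
  LinearMap.toContinuousLinearMap (transposeLinearEquiv m n ℝ ℝ).toLinearMap

noncomputable def traceCLM (n : Type*) [Fintype n] : Matrix n n ℝ →L[ℝ] ℝ :=
  LinearMap.toContinuousLinearMap (traceLinearMap n ℝ ℝ)

/- The sup norm does not make `Matrix n n ℝ` a normed ring, so the derivative of inversion is
transported from the Banach algebra of operators on `EuclideanSpace ℝ n`. -/
theorem hasFDerivAt_inv [DecidableEq n] {X : Matrix n n ℝ} (hX : IsUnit X) :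
    HasFDerivAt (fun Y : Matrix n n ℝ => Y⁻¹) (-(mulCLM X⁻¹ ∘L mulCLM.flip X⁻¹)) X := by
  let e := (toEuclideanCLM (n := n) (𝕜 := ℝ)).toAlgEquiv
  let eL := e.toLinearEquiv.toContinuousLinearEquiv
  have h_inv : (fun Y : Matrix n n ℝ => Y⁻¹) = eL.symm ∘ Ring.inverse ∘ eL := by
    funext Y
    simp [eL, nonsing_inv_eq_ringInverse, ← map_ringInverse]
  obtain ⟨u, rfl⟩ := hX
  have h_ring := hasFDerivAt_ringInverse (𝕜 := ℝ) (Units.map e.toMonoidHom u)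
  rw [Units.coe_map] at h_ring
  rw [h_inv]
  refine (eL.symm.hasFDerivAt.comp _ (h_ring.comp _ eL.hasFDerivAt)).congr_fderiv ?_
  ext1 H
  change e.symm (-(e ↑u⁻¹ * e H * e ↑u⁻¹)) = -((u : Matrix n n ℝ)⁻¹ * (H * (u : Matrix n n ℝ)⁻¹))
  rw [← map_mul, ← map_mul, ← map_neg, AlgEquiv.symm_apply_apply, coe_units_inv, Matrix.mul_assoc]

theorem trace_fromBlocks {α : Type*} [AddCommMonoid α] (A : Matrix m m α) (B : Matrix m n α)
    (C : Matrix n m α) (D : Matrix n n α) : (fromBlocks A B C D).trace = A.trace + D.trace := by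
  simp [trace, Fintype.sum_sum_type]

end Matrix

variable {a b c : Type*} [Fintype a] [Fintype b] [Fintype c]

theorem hasFDerivAt_transpose_mul_mul (A : Matrix a a ℝ) (Y : Matrix a b ℝ) :
    ∃ L : Matrix a b ℝ →L[ℝ] Matrix b b ℝ, HasFDerivAt (fun Z => Zᵀ * A * Z) L Y ∧
      ∀ H, L H = Hᵀ * A * Y + Yᵀ * A * H := by
  have h_left :=
    (mulCLM.flip A ∘L (transposeCLM : Matrix a b ℝ →L[ℝ] Matrix b a ℝ)).hasFDerivAt (x := Y)
  refine ⟨_, mulCLM.hasFDerivAt_of_bilinear h_left (hasFDerivAt_id Y), fun H => ?_⟩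
  exact add_comm _ _

theorem trace_mul_inv_transpose_deriv_eq {α : Type*} [CommRing α] {A : Matrix c c α}
    {B : Matrix c a α} {M : Matrix a a α} {P : Matrix b b α} (hA : Aᵀ = A) (hM : Mᵀ = M)
    (hP : Pᵀ = P) (X H : Matrix a b α) :
    (M * X * P * Hᵀ + (M * X * -(P * (((B * H)ᵀ * A * (B * X) + (B * X)ᵀ * A * (B * H)) * P)) +
      M * H * P) * Xᵀ).trace =
      2 * (Hᵀ * (M * X * P - Bᵀ * A * B * X * P * Xᵀ * M * X * P)).trace := by
  simp only [Matrix.add_mul, Matrix.mul_add, Matrix.mul_neg, Matrix.neg_mul, Matrix.mul_sub,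
    trace_add, trace_neg, trace_sub, transpose_mul, Matrix.mul_assoc]
  -- each `rw [trace_mul_comm]` moves the leading factor of the product to the end
  have h_MXP : (M * (X * (P * Hᵀ))).trace = (Hᵀ * (M * (X * P))).trace := by
    iterate 3 (rw [trace_mul_comm]; simp only [Matrix.mul_assoc])
  have h_MHP : (M * (H * (P * Xᵀ))).trace = (Hᵀ * (M * (X * P))).trace := by
    rw [← trace_transpose]
    simp only [transpose_mul, transpose_transpose, hM, hP, Matrix.mul_assoc]
    iterate 2 (rw [trace_mul_comm]; simp only [Matrix.mul_assoc])
  have h_BH_left : (M * (X * (P * (Hᵀ * (Bᵀ * (A * (B * (X * (P * Xᵀ))))))))).trace =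
      (Hᵀ * (Bᵀ * (A * (B * (X * (P * (Xᵀ * (M * (X * P))))))))).trace := by
    iterate 3 (rw [trace_mul_comm]; simp only [Matrix.mul_assoc])
  have h_BH_right : (M * (X * (P * (Xᵀ * (Bᵀ * (A * (B * (H * (P * Xᵀ))))))))).trace =
      (Hᵀ * (Bᵀ * (A * (B * (X * (P * (Xᵀ * (M * (X * P))))))))).trace := by
    rw [← trace_transpose]
    simp only [transpose_mul, transpose_transpose, hM, hP, hA, Matrix.mul_assoc]
    iterate 2 (rw [trace_mul_comm]; simp only [Matrix.mul_assoc])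
  rw [h_MXP, h_MHP, h_BH_left, h_BH_right]
  ring

theorem hasFDerivAt_trace_mul_inv_transpose [DecidableEq b] {A : Matrix c c ℝ} (hA : A.IsSymm)
    (B : Matrix c a ℝ) {M : Matrix a a ℝ} (hM : M.IsSymm) {X : Matrix a b ℝ}
    (hX : IsUnit ((B * X)ᵀ * A * (B * X))) :
    ∃ L : Matrix a b ℝ →L[ℝ] ℝ,
      HasFDerivAt (fun Y => (M * Y * ((B * Y)ᵀ * A * (B * Y))⁻¹ * Yᵀ).trace) L X ∧
      ∀ H, L H = 2 * (Hᵀ * (M * X * ((B * X)ᵀ * A * (B * X))⁻¹ -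
        Bᵀ * A * B * X * ((B * X)ᵀ * A * (B * X))⁻¹ * Xᵀ * M * X *
          ((B * X)ᵀ * A * (B * X))⁻¹)).trace := by
  obtain ⟨L_S, h_S, h_S_apply⟩ := hasFDerivAt_transpose_mul_mul A (B * X)
  have h_inv := (hasFDerivAt_inv hX).comp X (h_S.comp X (mulCLM B).hasFDerivAt)
  have h_prod := mulCLM.hasFDerivAt_of_bilinear
    (mulCLM.hasFDerivAt_of_bilinear (mulCLM M).hasFDerivAt h_inv) transposeCLM.hasFDerivAt
  refine ⟨_, (traceCLM a).hasFDerivAt.comp X h_prod, fun H => ?_⟩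
  have h_symm : (((B * X)ᵀ * A * (B * X))⁻¹)ᵀ = ((B * X)ᵀ * A * (B * X))⁻¹ := by
    rw [transpose_nonsing_inv]
    simp [Matrix.mul_assoc, hA.eq]
  rw [← trace_mul_inv_transpose_deriv_eq hA.eq hM.eq h_symm X H, ← h_S_apply]
  rfl

noncomputable def blockDiag2CLM (p q : ℕ) :
    Matrix (Fin p) (Fin q) ℝ →L[ℝ] Matrix (Fin p ⊕ Fin p) (Fin q ⊕ Fin q) ℝ :=
  LinearMap.toContinuousLinearMap
    { toFun := blockDiag2
      map_add' := fun X Y => by simp [blockDiag2, fromBlocks_add]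
      map_smul' := fun r X => by simp [blockDiag2, fromBlocks_smul] }

theorem trace_transpose_blockDiag2_mul {p q : ℕ} (H : Matrix (Fin p) (Fin q) ℝ)
    (N : Matrix (Fin p ⊕ Fin p) (Fin q ⊕ Fin q) ℝ) :
    ((blockDiag2 H)ᵀ * N).trace = (Hᵀ * (N.toBlocks₁₁ + N.toBlocks₂₂)).trace := by
  conv_lhs => rw [← fromBlocks_toBlocks N]
  rw [blockDiag2, fromBlocks_transpose, fromBlocks_multiply, trace_fromBlocks]
  simp [Matrix.mul_add, trace_add]

theorem stmt_8_general (𝒩 Nb N : ℕ)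
    (A : Matrix (Fin N) (Fin N) ℝ) (hA : A.IsSymm)
    (B : Matrix (Fin N) (Fin 𝒩 ⊕ Fin 𝒩) ℝ)
    (M : Matrix (Fin 𝒩 ⊕ Fin 𝒩) (Fin 𝒩 ⊕ Fin 𝒩) ℝ) (hM : M.IsSymm)
    (R : Matrix (Fin 𝒩) (Fin Nb) ℝ)
    (hinv : IsUnit (overlapS A B R)) :
    ∃ L : Matrix (Fin 𝒩) (Fin Nb) ℝ →L[ℝ] ℝ,
      HasFDerivAt
        (fun R' : Matrix (Fin 𝒩) (Fin Nb) ℝ =>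
          -(M * blockDiag2 R' * (overlapS A B R')⁻¹ * (blockDiag2 R')ᵀ).trace)
        L R ∧
      ∀ H : Matrix (Fin 𝒩) (Fin Nb) ℝ,
        L H = -2 * (Hᵀ * ((MA A B M R).toBlocks₁₁ + (MA A B M R).toBlocks₂₂)).trace := by
  obtain ⟨L, hL, hL_apply⟩ :=
    hasFDerivAt_trace_mul_inv_transpose hA B hM (X := blockDiag2 R) hinv
  refine ⟨-(L ∘L blockDiag2CLM 𝒩 Nb), (hL.comp R (blockDiag2CLM 𝒩 Nb).hasFDerivAt).neg,
    fun H => ?_⟩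
  change -L (blockDiag2 H) = _
  rw [hL_apply, ← trace_transpose_blockDiag2_mul, neg_mul]
  rfl

/-- The function `f(R) = −Tr (M I_R S(R)⁻¹ I_Rᵀ)` is Fréchet differentiable at any `R`
where `S(R)` is invertible, with derivative
`H ↦ −2 Tr (Hᵀ (M_A(R)^{++} + M_A(R)^{--}))`. -/
theorem stmt_8 (𝒩 Nb N : ℕ) (h𝒩 : 1 ≤ 𝒩) (hNb : 1 ≤ Nb) (hN : 1 ≤ N)
    (A : Matrix (Fin N) (Fin N) ℝ) (hA : A.IsSymm)
    (B : Matrix (Fin N) (Fin 𝒩 ⊕ Fin 𝒩) ℝ)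
    (M : Matrix (Fin 𝒩 ⊕ Fin 𝒩) (Fin 𝒩 ⊕ Fin 𝒩) ℝ) (hM : M.IsSymm)
    (R : Matrix (Fin 𝒩) (Fin Nb) ℝ)
    (hinv : IsUnit (overlapS A B R)) :
    ∃ L : Matrix (Fin 𝒩) (Fin Nb) ℝ →L[ℝ] ℝ,
      HasFDerivAt
        (fun R' : Matrix (Fin 𝒩) (Fin Nb) ℝ =>
          -(M * blockDiag2 R' * (overlapS A B R')⁻¹ * (blockDiag2 R')ᵀ).trace)
        L R ∧
      ∀ H : Matrix (Fin 𝒩) (Fin Nb) ℝ,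
        L H = -2 * (Hᵀ * ((MA A B M R).toBlocks₁₁ + (MA A B M R).toBlocks₂₂)).trace :=
  stmt_8_general 𝒩 Nb N A hA B M hM R hinv
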